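/- arXiv:1211.4934 — 3 statements merged into one kernel-verified Lean document; each statement's English description precedes it below -/
import Mathlib

section
/- For every integer n with 0 ≤ n < p·q·r one has −1 ≤ Δ(n) ≤ 1; moreover, (1) Δ(n) = −1 if and only if f(n·p'/p) + f(n·q'/q) + f(n·r'/r) ≥ 2, and (2) Δ(n) = 1 if and only if f(n·p'/p) + f(n·q'/q) + f(n·r'/r) ≤ 1. Furthermore, Δ(n) ≥ 0 for every n ≥ p·q·r. -/
/-!
Dividing the defining identity by `pqr` gives `|e₀| = 1/(pqr) + p'/p + q'/q + r'/r`, hence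
`Δ(n) = 1 + n/(pqr) - (f(np'/p) + f(nq'/q) + f(nr'/r))` with each `f`-value in `[0, 1)`.
Since `Δ(n)` is an integer, the bounds on `n/(pqr)` and on the sum of the three `f`-values
determine it.
-/

section CeilSubSelf

variable {R : Type*} [CommRing R] [LinearOrder R] [IsStrictOrderedRing R] [FloorRing R]

lemma ceil_sub_self_nonneg (x : R) : 0 ≤ (⌈x⌉ : R) - x :=
  sub_nonneg.2 (Int.le_ceil x)

lemma ceil_sub_self_lt_one (x : R) : (⌈x⌉ : R) - x < 1 := by
  linarith [Int.ceil_lt_add_one x]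

lemma ceil_sub_self_add_add_mem_Ico (x y z : R) :
    ((⌈x⌉ : R) - x) + ((⌈y⌉ : R) - y) + ((⌈z⌉ : R) - z) ∈ Set.Ico 0 3 := by
  constructor
  · linarith [ceil_sub_self_nonneg x, ceil_sub_self_nonneg y, ceil_sub_self_nonneg z]
  · linarith [ceil_sub_self_lt_one x, ceil_sub_self_lt_one y, ceil_sub_self_lt_one z]

end CeilSubSelf

section IntegerOfShape

variable {D : ℤ} {t s : ℚ}

lemma Int.cast_eq_one_add_sub_cases (hD : (D : ℚ) = 1 + t - s) (ht : t ∈ Set.Ico 0 1)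
    (hs : s ∈ Set.Ico 0 3) (hts : t = 0 → s = 0) :
    (-1 ≤ D ∧ D ≤ 1) ∧ (D = -1 ↔ 2 ≤ s) ∧ (D = 1 ↔ s ≤ 1) := by
  obtain ⟨ht0, ht1⟩ := ht
  obtain ⟨hs0, hs3⟩ := hs
  have hlow : (-2 : ℤ) < D := by exact_mod_cast (show (-2 : ℚ) < D by linarith)
  have hhigh : D < 2 := by exact_mod_cast (show (D : ℚ) < 2 by linarith)
  refine ⟨⟨by omega, by omega⟩, ⟨fun h => ?_, fun h => ?_⟩, fun h => ?_, fun h => ?_⟩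
  · have : (D : ℚ) = -1 := by exact_mod_cast h
    linarith
  · have : D < 0 := by exact_mod_cast (show (D : ℚ) < 0 by linarith)
    omega
  · have : (D : ℚ) = 1 := by exact_mod_cast h
    linarith
  · rcases ht0.eq_or_lt with rfl | htpos
    · have : (D : ℚ) = 1 := by linarith [hts rfl]
      exact_mod_cast this
    · have : 0 < D := by exact_mod_cast (show (0 : ℚ) < D by linarith)
      omega

lemma Int.cast_eq_one_add_sub_nonneg (hD : (D : ℚ) = 1 + t - s) (ht : 1 ≤ t) (hs : s < 3) :
    0 ≤ D := by
  have : (-1 : ℤ) < D := by exact_mod_cast (show (-1 : ℚ) < D by linarith)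
  omega

end IntegerOfShape

section SeifertIdentity

variable {p q r p' q' r' : ℕ} {e0 : ℤ}

lemma ne_zero_of_identity
    (heq : e0 * (p * q * r : ℤ) + (p' : ℤ) * q * r + (p : ℤ) * q' * r + (p : ℤ) * q * r' = -1) :
    p ≠ 0 ∧ q ≠ 0 ∧ r ≠ 0 := by
  refine ⟨?_, ?_, ?_⟩ <;> rintro rfl <;> simp only [Nat.cast_zero, mul_zero, zero_mul,
    add_zero, zero_add] at heq
  · linarith [(by positivity : (0 : ℤ) ≤ p' * q * r)]
  · linarith [(by positivity : (0 : ℤ) ≤ p * q' * r)]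
  · linarith [(by positivity : (0 : ℤ) ≤ p * q * r')]

lemma neg_of_identity
    (heq : e0 * (p * q * r : ℤ) + (p' : ℤ) * q * r + (p : ℤ) * q' * r + (p : ℤ) * q * r' = -1) :
    e0 < 0 := by
  obtain ⟨hp, hq, hr⟩ := ne_zero_of_identity heq
  have hpqr : (0 : ℤ) < p * q * r := by positivity
  have : e0 * (p * q * r) < 0 := by
    linarith [(by positivity : (0 : ℤ) ≤ p' * q * r), (by positivity : (0 : ℤ) ≤ p * q' * r),
      (by positivity : (0 : ℤ) ≤ p * q * r')]
  exact neg_of_mul_neg_left this hpqr.le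

lemma neg_eq_of_identity
    (heq : e0 * (p * q * r : ℤ) + (p' : ℤ) * q * r + (p : ℤ) * q' * r + (p : ℤ) * q * r' = -1) :
    (-e0 : ℚ) = 1 / (p * q * r) + p' / p + q' / q + r' / r := by
  obtain ⟨hp, hq, hr⟩ := ne_zero_of_identity heq
  have heqQ : (e0 : ℚ) * (p * q * r) + p' * q * r + p * q' * r + p * q * r' = -1 := by
    exact_mod_cast heq
  field_simp
  linear_combination -heqQ

lemma cast_one_add_abs_mul_sub_ceil_eq
    (heq : e0 * (p * q * r : ℤ) + (p' : ℤ) * q * r + (p : ℤ) * q' * r + (p : ℤ) * q * r' = -1)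
    (n : ℕ) :
    (((1 + |e0| * n - ⌈(n * p' : ℚ) / p⌉ - ⌈(n * q' : ℚ) / q⌉ - ⌈(n * r' : ℚ) / r⌉ : ℤ)) : ℚ) =
      1 + n / (p * q * r) - ((⌈(n * p' : ℚ) / p⌉ - (n * p' : ℚ) / p) +
        (⌈(n * q' : ℚ) / q⌉ - (n * q' : ℚ) / q) + (⌈(n * r' : ℚ) / r⌉ - (n * r' : ℚ) / r)) := by
  have habs : (|e0| : ℚ) = -e0 := by exact_mod_cast abs_of_neg (neg_of_identity heq)
  push_cast
  rw [habs, neg_eq_of_identity heq]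
  ring

end SeifertIdentity

theorem stmt_3_general (p q r : ℕ)
    (e0 : ℤ) (p' q' r' : ℕ)
    (heq : e0 * (p * q * r : ℤ) + (p' : ℤ) * q * r + (p : ℤ) * q' * r + (p : ℤ) * q * r' = -1)
    (Δ : ℕ → ℤ)
    (hΔ : ∀ n : ℕ, Δ n =
      1 + |e0| * n - ⌈(n * p' : ℚ) / p⌉ - ⌈(n * q' : ℚ) / q⌉ - ⌈(n * r' : ℚ) / r⌉)
    (f : ℚ → ℚ) (hf : ∀ x : ℚ, f x = ⌈x⌉ - x) :
    (∀ n : ℕ, n < p * q * r →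
      (-1 ≤ Δ n ∧ Δ n ≤ 1) ∧
      (Δ n = -1 ↔ 2 ≤ f ((n * p' : ℚ) / p) + f ((n * q' : ℚ) / q) + f ((n * r' : ℚ) / r)) ∧
      (Δ n = 1 ↔ f ((n * p' : ℚ) / p) + f ((n * q' : ℚ) / q) + f ((n * r' : ℚ) / r) ≤ 1)) ∧
    (∀ n : ℕ, p * q * r ≤ n → 0 ≤ Δ n) := by
  obtain ⟨hp, hq, hr⟩ := ne_zero_of_identity heq
  have hpqr : (0 : ℚ) < p * q * r := by positivity
  have key (n : ℕ) : (Δ n : ℚ) = 1 + n / (p * q * r) -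
      (f ((n * p' : ℚ) / p) + f ((n * q' : ℚ) / q) + f ((n * r' : ℚ) / r)) := by
    rw [hΔ, hf, hf, hf]
    exact cast_one_add_abs_mul_sub_ceil_eq heq n
  have hsum (n : ℕ) :
      f ((n * p' : ℚ) / p) + f ((n * q' : ℚ) / q) + f ((n * r' : ℚ) / r) ∈ Set.Ico 0 3 := by
    simpa only [hf] using ceil_sub_self_add_add_mem_Ico ((n * p' : ℚ) / p) _ _
  refine ⟨fun n hn => Int.cast_eq_one_add_sub_cases (key n)
      ⟨by positivity, (div_lt_one hpqr).2 (by exact_mod_cast hn)⟩ (hsum n) fun h0 => ?_,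
    fun n hn => Int.cast_eq_one_add_sub_nonneg (key n)
      ((one_le_div hpqr).2 (by exact_mod_cast hn)) (hsum n).2⟩
  obtain rfl : n = 0 := by simpa [hpqr.ne'] using h0
  simp [hf]

/-- For `0 ≤ n < pqr` one has `-1 ≤ Δ(n) ≤ 1`, with `Δ(n) = -1` iff
`f(np'/p) + f(nq'/q) + f(nr'/r) ≥ 2` and `Δ(n) = 1` iff this sum is `≤ 1`,
where `f(x) = ⌈x⌉ - x`.  Moreover `Δ(n) ≥ 0` for `n ≥ pqr`. -/
theorem stmt_3 (p q r : ℕ) (hp : 1 < p) (hpq : p < q) (hqr : q < r)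
    (hcopq : Nat.Coprime p q) (hcopr : Nat.Coprime p r) (hcoqr : Nat.Coprime q r)
    (e0 : ℤ) (p' q' r' : ℕ)
    (hp' : p' ≤ p - 1) (hq' : q' ≤ q - 1) (hr' : r' ≤ r - 1)
    (heq : e0 * (p * q * r : ℤ) + (p' : ℤ) * q * r + (p : ℤ) * q' * r + (p : ℤ) * q * r' = -1)
    (Δ : ℕ → ℤ)
    (hΔ : ∀ n : ℕ, Δ n =
      1 + |e0| * n - ⌈(n * p' : ℚ) / p⌉ - ⌈(n * q' : ℚ) / q⌉ - ⌈(n * r' : ℚ) / r⌉)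
    (f : ℚ → ℚ) (hf : ∀ x : ℚ, f x = ⌈x⌉ - x) :
    (∀ n : ℕ, n < p * q * r →
      (-1 ≤ Δ n ∧ Δ n ≤ 1) ∧
      (Δ n = -1 ↔ 2 ≤ f ((n * p' : ℚ) / p) + f ((n * q' : ℚ) / q) + f ((n * r' : ℚ) / r)) ∧
      (Δ n = 1 ↔ f ((n * p' : ℚ) / p) + f ((n * q' : ℚ) / q) + f ((n * r' : ℚ) / r) ≤ 1)) ∧
    (∀ n : ℕ, p * q * r ≤ n → 0 ≤ Δ n) :=
  stmt_3_general p q r e0 p' q' r' heq Δ hΔ f hf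
end

section
/- Let l ≥ 4 and (p₁, …, p_l) be as in the context. Then: (1) Δ(n) ≥ 0 for every integer n > N₀; (2) Δ(n) = −Δ(N₀ − n) for every integer n with 0 ≤ n ≤ N₀; (3) Δ(n) ∈ {−(l−2), …, −1, 0, 1, …, l−2} for every integer n with 0 ≤ n ≤ N₀. -/
/-!
Multiplying by `P = ∏ pᵢ` makes everything integral: with `Qᵢ = P / pᵢ` and
`cᵢ(n) = (-n pᵢ') mod pᵢ ∈ [0, pᵢ - 1]` one has `P Δ(n) = P + n - ∑ Qᵢ cᵢ(n)`, because
`|e₀| P = 1 + ∑ Qᵢ pᵢ'`. Since `∑ Qᵢ (pᵢ - 1) = N₀ + 2P`, the bounds on `cᵢ` give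
`P Δ(n) > n - N₀ - P` and `P Δ(n) ≤ P + n`, whence (1) and the upper half of (3).
Reducing the defining identities of `e₀` and `N₀` mod `pᵢ` gives `N₀ pᵢ' ≡ 1`, so
`cᵢ(n) + cᵢ(N₀ - n) = pᵢ - 1` and `P (Δ(n) + Δ(N₀ - n)) = 2P + N₀ - ∑ Qᵢ (pᵢ - 1) = 0`,
which is (2) and turns the upper bound of (3) into the lower one.
-/

open Finset

theorem Rat.ceil_intCast_div_natCast_mul_sub (a : ℤ) (d : ℕ) :
    ⌈(a / d : ℚ)⌉ * d - a = -a % d := by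
  rw [Rat.ceil_intCast_div_natCast]
  linear_combination -Int.emod_add_mul_ediv (-a) d

theorem Int.emod_add_emod_eq_sub_one {a b d : ℤ} (hd : 0 < d) (h : d ∣ a + b + 1) :
    a % d + b % d = d - 1 := by
  have hdvd : d ∣ a % d + b % d + 1 := by
    have : a % d + b % d + 1 = a + b + 1 - d * (a / d + b / d) := by
      rw [Int.emod_def, Int.emod_def]; ring
    rw [this]
    exact dvd_sub h (dvd_mul_right d _)
  obtain ⟨k, hk⟩ := hdvd
  have ha := Int.emod_nonneg a hd.ne'
  have hb := Int.emod_nonneg b hd.ne'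
  have ha' := Int.emod_lt_of_pos a hd
  have hb' := Int.emod_lt_of_pos b hd
  have hk1 : k = 1 := by
    have hk0 : 0 < k := by nlinarith
    have hk2 : k < 2 := by nlinarith
    omega
  rw [hk1] at hk
  linarith

theorem dvd_sum_sub_of_dvd {ι R : Type*} [Fintype ι] [DecidableEq ι] [CommRing R] {d : R}
    {g : ι → R} (i : ι)
    (h : ∀ j, j ≠ i → d ∣ g j) : d ∣ ∑ j, g j - g i := by
  rw [← sum_erase_eq_sub (mem_univ i)]
  exact dvd_sum fun j hj => h j (ne_of_mem_erase hj)

theorem prod_natCast_pos {ι : Type*} [Fintype ι] {p : ι → ℕ} (hp : ∀ i, 0 < p i) :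
    0 < ∏ i, (p i : ℤ) :=
  prod_pos fun i _ => Int.natCast_pos.mpr (hp i)

section

variable {ι : Type*} [Fintype ι] [DecidableEq ι]

def cofactor (p : ι → ℕ) (i : ι) : ℤ := ∏ j ∈ univ.erase i, (p j : ℤ)

theorem cofactor_mul (p : ι → ℕ) (i : ι) : cofactor p i * p i = ∏ j, (p j : ℤ) :=
  prod_erase_mul _ _ (mem_univ i)

theorem dvd_cofactor (p : ι → ℕ) {i j : ι} (h : j ≠ i) : (p i : ℤ) ∣ cofactor p j :=
  dvd_prod_of_mem _ (mem_erase.mpr ⟨h.symm, mem_univ i⟩)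

theorem sum_cofactor_mul_sub_one (p : ι → ℕ) :
    ∑ i, cofactor p i * (p i - 1) = Fintype.card ι * ∏ i, (p i : ℤ) - ∑ i, cofactor p i := by
  simp only [mul_sub, mul_one, cofactor_mul, sum_sub_distrib, sum_const, card_univ, nsmul_eq_mul]

variable {p p' : ι → ℕ} {e0 : ℤ} {N0 : ℕ}

theorem cofactor_pos (hp : ∀ i, 0 < p i) (i : ι) : 0 < cofactor p i :=
  prod_pos fun j _ => Int.natCast_pos.mpr (hp j)

theorem sum_cofactor_mul_emod_nonneg (hp : ∀ i, 0 < p i) (a : ι → ℤ) :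
    0 ≤ ∑ i, cofactor p i * (a i % p i) :=
  sum_nonneg fun i _ => mul_nonneg (cofactor_pos hp i).le
    (Int.emod_nonneg _ (Int.natCast_pos.mpr (hp i)).ne')

theorem sum_cofactor_mul_emod_le (hp : ∀ i, 0 < p i) (a : ι → ℤ) :
    ∑ i, cofactor p i * (a i % p i) ≤
      Fintype.card ι * ∏ i, (p i : ℤ) - ∑ i, cofactor p i := by
  rw [← sum_cofactor_mul_sub_one]
  refine sum_le_sum fun i _ => mul_le_mul_of_nonneg_left ?_ (cofactor_pos hp i).le
  have := Int.emod_lt_of_pos (a i) (Int.natCast_pos.mpr (hp i))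
  omega

theorem sum_cofactor_mul_emod_add (hp : ∀ i, 0 < p i) {a b : ι → ℤ}
    (h : ∀ i, (p i : ℤ) ∣ a i + b i + 1) :
    ∑ i, cofactor p i * (a i % p i) + ∑ i, cofactor p i * (b i % p i) =
      Fintype.card ι * ∏ i, (p i : ℤ) - ∑ i, cofactor p i := by
  rw [← sum_cofactor_mul_sub_one, ← sum_add_distrib]
  refine sum_congr rfl fun i _ => ?_
  rw [← mul_add, Int.emod_add_emod_eq_sub_one (Int.natCast_pos.mpr (hp i)) (h i)]

theorem dvd_cofactor_mul_add_one
    (heq : e0 * ∏ i, (p i : ℤ) + ∑ i, cofactor p i * p' i = -1) (i : ι) :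
    (p i : ℤ) ∣ cofactor p i * p' i + 1 := by
  have hrest := dvd_sum_sub_of_dvd (g := fun j => cofactor p j * p' j) i
    fun j hj => (dvd_cofactor p hj).mul_right _
  have hprod : (p i : ℤ) ∣ e0 * ∏ j, (p j : ℤ) := (dvd_prod_of_mem _ (mem_univ i)).mul_left _
  have : cofactor p i * p' i + 1 =
      -(e0 * ∏ j, (p j : ℤ)) - (∑ j, cofactor p j * p' j - cofactor p i * p' i) := by
    linarith
  rw [this]
  exact dvd_sub (dvd_neg.mpr hprod) hrest

theorem dvd_add_cofactor {N k : ℤ} (hN : N = k * ∏ i, (p i : ℤ) - ∑ i, cofactor p i) (i : ι) :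
    (p i : ℤ) ∣ N + cofactor p i := by
  have hrest := dvd_sum_sub_of_dvd (g := cofactor p) i fun j hj => dvd_cofactor p hj
  have hprod : (p i : ℤ) ∣ k * ∏ j, (p j : ℤ) := (dvd_prod_of_mem _ (mem_univ i)).mul_left _
  have : N + cofactor p i = k * ∏ j, (p j : ℤ) - (∑ j, cofactor p j - cofactor p i) := by
    linarith
  rw [this]
  exact dvd_sub hprod hrest

def delta (e0 : ℤ) (p p' : ι → ℕ) (n : ℕ) : ℤ :=
  1 + |e0| * n - ∑ i, ⌈(n * p' i : ℚ) / p i⌉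

theorem e0_neg (hp : ∀ i, 0 < p i)
    (heq : e0 * ∏ i, (p i : ℤ) + ∑ i, cofactor p i * p' i = -1) : e0 < 0 := by
  have hP := prod_natCast_pos hp
  have : 0 ≤ ∑ i, cofactor p i * p' i :=
    sum_nonneg fun i _ => mul_nonneg (cofactor_pos hp i).le (Int.natCast_nonneg _)
  nlinarith

theorem prod_mul_delta (hp : ∀ i, 0 < p i)
    (heq : e0 * ∏ i, (p i : ℤ) + ∑ i, cofactor p i * p' i = -1) (n : ℕ) :
    (∏ i, (p i : ℤ)) * delta e0 p p' n =
      ∏ i, (p i : ℤ) + n - ∑ i, cofactor p i * (-(n * p' i : ℤ) % p i) := by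
  have hceil (i : ι) : (∏ j, (p j : ℤ)) * ⌈(n * p' i : ℚ) / p i⌉ =
      cofactor p i * (-(n * p' i : ℤ) % p i) + n * (cofactor p i * p' i) := by
    have := Rat.ceil_intCast_div_natCast_mul_sub (n * p' i) (p i)
    push_cast at this
    rw [← cofactor_mul, ← this]
    ring
  rw [delta, abs_of_neg (e0_neg hp heq), mul_sub, mul_sum, sum_congr rfl fun i _ => hceil i,
    sum_add_distrib, ← mul_sum]
  linear_combination (-(n : ℤ)) * heq

theorem delta_nonneg_of_lt (hp : ∀ i, 0 < p i)
    (heq : e0 * ∏ i, (p i : ℤ) + ∑ i, cofactor p i * p' i = -1)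
    (hN0 : (N0 : ℤ) = (Fintype.card ι - 2) * ∏ i, (p i : ℤ) - ∑ i, cofactor p i)
    {n : ℕ} (hn : N0 < n) : 0 ≤ delta e0 p p' n := by
  have hP := prod_natCast_pos hp
  have hbound := sum_cofactor_mul_emod_le hp fun i => -(n * p' i : ℤ)
  have hprod := prod_mul_delta hp heq n
  have : (N0 : ℤ) < n := by exact_mod_cast hn
  nlinarith

theorem delta_add_delta_eq_zero (hp : ∀ i, 0 < p i)
    (heq : e0 * ∏ i, (p i : ℤ) + ∑ i, cofactor p i * p' i = -1)
    (hN0 : (N0 : ℤ) = (Fintype.card ι - 2) * ∏ i, (p i : ℤ) - ∑ i, cofactor p i)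
    {n m : ℕ} (hnm : n + m = N0) : delta e0 p p' n + delta e0 p p' m = 0 := by
  have hP := prod_natCast_pos hp
  have hcong (i : ι) : (p i : ℤ) ∣ -(n * p' i : ℤ) + -(m * p' i : ℤ) + 1 := by
    have : -(n * p' i : ℤ) + -(m * p' i : ℤ) + 1 =
        (cofactor p i * p' i + 1) - (N0 + cofactor p i) * p' i := by
      rw [← hnm]; push_cast; ring
    rw [this]
    exact dvd_sub (dvd_cofactor_mul_add_one heq i) ((dvd_add_cofactor hN0 i).mul_right _)
  have hsum := sum_cofactor_mul_emod_add hp hcong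
  have hzero : (∏ i, (p i : ℤ)) * (delta e0 p p' n + delta e0 p p' m) = 0 := by
    rw [mul_add, prod_mul_delta hp heq, prod_mul_delta hp heq]
    have : (n : ℤ) + m = N0 := by exact_mod_cast hnm
    linarith
  exact (mul_eq_zero.mp hzero).resolve_left hP.ne'

theorem delta_le [Nonempty ι] (hp : ∀ i, 0 < p i)
    (heq : e0 * ∏ i, (p i : ℤ) + ∑ i, cofactor p i * p' i = -1)
    (hN0 : (N0 : ℤ) = (Fintype.card ι - 2) * ∏ i, (p i : ℤ) - ∑ i, cofactor p i)
    {n : ℕ} (hn : n ≤ N0) : delta e0 p p' n ≤ Fintype.card ι - 2 := by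
  have hP := prod_natCast_pos hp
  have hcof : 0 < ∑ i, cofactor p i := sum_pos (fun i _ => cofactor_pos hp i) univ_nonempty
  have hbound := sum_cofactor_mul_emod_nonneg hp fun i => -(n * p' i : ℤ)
  have hprod := prod_mul_delta hp heq n
  have : (n : ℤ) ≤ N0 := by exact_mod_cast hn
  nlinarith

end

theorem stmt_9_general (l : ℕ) (hl : 4 ≤ l) (p : Fin l → ℕ)
    (hp1 : ∀ i, 1 < p i)
    (e0 : ℤ) (p' : Fin l → ℕ)
    (heq : e0 * ∏ i, (p i : ℤ)
      + ∑ i, (∏ j ∈ Finset.univ.erase i, (p j : ℤ)) * (p' i : ℤ) = -1)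
    (Δ : ℕ → ℤ)
    (hΔ : ∀ n : ℕ, Δ n = 1 + |e0| * n - ∑ i, ⌈(n * p' i : ℚ) / p i⌉)
    (N0 : ℕ)
    (hN0 : (N0 : ℤ) = ((l : ℤ) - 2) * ∏ i, (p i : ℤ)
      - ∑ i, ∏ j ∈ Finset.univ.erase i, (p j : ℤ)) :
    (∀ n : ℕ, N0 < n → 0 ≤ Δ n) ∧
    (∀ n : ℕ, n ≤ N0 → Δ n = -Δ (N0 - n)) ∧
    (∀ n : ℕ, n ≤ N0 → -((l : ℤ) - 2) ≤ Δ n ∧ Δ n ≤ (l : ℤ) - 2) := by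
  obtain rfl : Δ = delta e0 p p' := funext hΔ
  have hp (i : Fin l) : 0 < p i := (hp1 i).pos
  have hN0' : (N0 : ℤ) = (Fintype.card (Fin l) - 2) * ∏ i, (p i : ℤ) - ∑ i, cofactor p i := by
    rwa [Fintype.card_fin]
  have : Nonempty (Fin l) := ⟨⟨0, by omega⟩⟩
  have hsymm {n : ℕ} (hn : n ≤ N0) := delta_add_delta_eq_zero hp heq hN0' (Nat.add_sub_cancel' hn)
  have hle {n : ℕ} (hn : n ≤ N0) := Fintype.card_fin l ▸ delta_le hp heq hN0' hn
  refine ⟨fun n hn => delta_nonneg_of_lt hp heq hN0' hn, fun n hn => ?_, fun n hn => ?_⟩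
  · linarith [hsymm hn]
  · exact ⟨by linarith [hsymm hn, hle (Nat.sub_le N0 n)], hle hn⟩

/-- For `l ≥ 4` pairwise coprime integers `1 < p₁ < … < p_l`, the function `Δ` satisfies:
(1) `Δ(n) ≥ 0` for `n > N₀`; (2) `Δ(n) = -Δ(N₀ - n)` for `0 ≤ n ≤ N₀`;
(3) `-(l-2) ≤ Δ(n) ≤ l-2` for `0 ≤ n ≤ N₀`, where `N₀ = P((l-2) - Σᵢ 1/pᵢ)`. -/
theorem stmt_9 (l : ℕ) (hl : 4 ≤ l) (p : Fin l → ℕ)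
    (hp1 : ∀ i, 1 < p i) (hmono : StrictMono p)
    (hcop : ∀ i j, i ≠ j → Nat.Coprime (p i) (p j))
    (e0 : ℤ) (p' : Fin l → ℕ) (hp' : ∀ i, p' i ≤ p i - 1)
    (heq : e0 * ∏ i, (p i : ℤ)
      + ∑ i, (∏ j ∈ Finset.univ.erase i, (p j : ℤ)) * (p' i : ℤ) = -1)
    (Δ : ℕ → ℤ)
    (hΔ : ∀ n : ℕ, Δ n = 1 + |e0| * n - ∑ i, ⌈(n * p' i : ℚ) / p i⌉)
    (N0 : ℕ)
    (hN0 : (N0 : ℤ) = ((l : ℤ) - 2) * ∏ i, (p i : ℤ)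
      - ∑ i, ∏ j ∈ Finset.univ.erase i, (p j : ℤ)) :
    (∀ n : ℕ, N0 < n → 0 ≤ Δ n) ∧
    (∀ n : ℕ, n ≤ N0 → Δ n = -Δ (N0 - n)) ∧
    (∀ n : ℕ, n ≤ N0 → -((l : ℤ) - 2) ≤ Δ n ∧ Δ n ≤ (l : ℤ) - 2) :=
  stmt_9_general l hl p hp1 e0 p' heq Δ hΔ N0 hN0
end

section
/- Let (p₁, p₂, …, p_l, p_{l+1}) be pairwise coprime integers with 1 < p₁ < p₂ < … < p_l < p_{l+1} and l ≥ 3. Then κ(p₁, …, p_l) ≤ κ(p₁, …, p_l, p_{l+1}). -/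
/-!
Write `q = p_{l+1}`. For `j ≤ l`, reducing the two defining equations modulo `p_j` shows
`p_j ∣ q P'_j - p'_j`, and dividing each equation by its product and comparing gives
`e₀ - E₀ q = ∑_j (q P'_j - p'_j) / p_j + P'_{l+1}`. Hence the ceilings in `Δ'(q n)` are those of
`Δ(n)` shifted by integers (the last one is exact), and `Δ'(q n) = Δ(n)`. Since every term
`min 0 Δ'(m)` is nonpositive, dropping those with `q ∤ m` can only increase the sum, so
`∑ min 0 Δ' ≤ ∑ min 0 Δ ≤ 0`.
-/

open Finset Function

section Finsum

variable {M : Type*} [AddCommMonoid M] [PartialOrder M] [IsOrderedAddMonoid M]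

theorem finsum_nonpos {α : Sort*} {f : α → M} (hf : ∀ a, f a ≤ 0) : ∑ᶠ a, f a ≤ 0 :=
  finsum_induction (· ≤ 0) le_rfl (fun _ _ => add_nonpos) hf

theorem finsum_le_finsum_comp_of_nonpos {α β : Type*} {f : α → M} (hf : ∀ a, f a ≤ 0)
    (hfin : f.HasFiniteSupport) {g : β → α} (hg : Injective g) :
    ∑ᶠ a, f a ≤ ∑ᶠ b, f (g b) := by
  rw [← finsum_mem_range hg, ← finsum_mem_univ f,
    ← finsum_mem_add_sdiff' (Set.subset_univ (Set.range g)) (by rwa [Set.univ_inter])]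
  exact add_le_of_nonpos_right (finsum_nonpos fun a => finsum_nonpos fun _ => hf a)

end Finsum

theorem Fin.prod_erase_castSucc {M : Type*} [CommMonoid M] {l : ℕ} (f : Fin (l + 1) → M)
    (j : Fin l) :
    ∏ k ∈ univ.erase j.castSucc, f k = (∏ k ∈ univ.erase j, f k.castSucc) * f (Fin.last l) := by
  simp only [← filter_ne', prod_filter, Fin.prod_univ_castSucc, ne_eq, Fin.castSucc_inj,
    (Fin.castSucc_lt_last j).ne', not_false_eq_true, if_true]

section Seifert

variable {ι : Type*} [Fintype ι]

def seifertDelta (e₀ : ℤ) (p p' : ι → ℕ) (n : ℕ) : ℤ :=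
  1 + |e₀| * n - ∑ i, ⌈(n * p' i : ℚ) / p i⌉

variable [DecidableEq ι]

def SatisfiesSeifertEq (e₀ : ℤ) (p p' : ι → ℕ) : Prop :=
  e₀ * ∏ i, (p i : ℤ) + ∑ i, (∏ j ∈ univ.erase i, (p j : ℤ)) * p' i = -1

namespace SatisfiesSeifertEq

variable {e₀ : ℤ} {p p' : ι → ℕ}

theorem lt_zero (h : SatisfiesSeifertEq e₀ p p') (hp : ∀ i, 0 < p i) : e₀ < 0 := by
  have hprod : 0 < ∏ i, (p i : ℤ) := prod_pos fun i _ => by exact_mod_cast hp i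
  have hsum : 0 ≤ ∑ i, (∏ j ∈ univ.erase i, (p j : ℤ)) * p' i := by positivity
  unfold SatisfiesSeifertEq at h
  nlinarith

theorem sum_div (h : SatisfiesSeifertEq e₀ p p') (hp : ∀ i, 0 < p i) :
    ∑ i, (p' i : ℚ) / p i = -e₀ - 1 / ∏ i, (p i : ℚ) := by
  have hp0 : ∀ i, (p i : ℚ) ≠ 0 := fun i => by exact_mod_cast (hp i).ne'
  have hprod : ∏ i, (p i : ℚ) ≠ 0 := prod_ne_zero_iff.mpr fun i _ => hp0 i
  have hq : (e₀ : ℚ) * ∏ i, (p i : ℚ) + ∑ i, (∏ j ∈ univ.erase i, (p j : ℚ)) * p' i = -1 := by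
    unfold SatisfiesSeifertEq at h; exact_mod_cast h
  have hterm : ∀ i,
      (p' i : ℚ) / p i = (∏ j ∈ univ.erase i, (p j : ℚ)) * p' i / ∏ j, (p j : ℚ) := by
    intro i
    have hA : ∏ j ∈ univ.erase i, (p j : ℚ) ≠ 0 := prod_ne_zero_iff.mpr fun j _ => hp0 j
    rw [← mul_prod_erase univ (fun j => (p j : ℚ)) (mem_univ i), mul_comm (p i : ℚ),
      mul_div_mul_left _ _ hA]
  rw [sum_congr rfl fun i _ => hterm i, ← Finset.sum_div]
  field_simp
  linear_combination hq

theorem dvd_prod_erase_mul_add_one (h : SatisfiesSeifertEq e₀ p p') (j : ι) :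
    (p j : ℤ) ∣ (∏ k ∈ univ.erase j, (p k : ℤ)) * p' j + 1 := by
  have hsplit := add_sum_erase univ (fun i => (∏ k ∈ univ.erase i, (p k : ℤ)) * p' i) (mem_univ j)
  have hothers : (p j : ℤ) ∣ e₀ * ∏ k, (p k : ℤ) +
      ∑ i ∈ univ.erase j, (∏ k ∈ univ.erase i, (p k : ℤ)) * p' i := by
    refine dvd_add (dvd_mul_of_dvd_right (dvd_prod_of_mem _ (mem_univ j)) _)
      (dvd_sum fun i hi => dvd_mul_of_dvd_left (dvd_prod_of_mem _ ?_) _)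
    exact mem_erase.mpr ⟨(ne_of_mem_erase hi).symm, mem_univ j⟩
  have : (∏ k ∈ univ.erase j, (p k : ℤ)) * p' j + 1 = -(e₀ * ∏ k, (p k : ℤ) +
      ∑ i ∈ univ.erase j, (∏ k ∈ univ.erase i, (p k : ℤ)) * p' i) := by
    unfold SatisfiesSeifertEq at h; linarith
  rw [this]
  exact hothers.neg_right

end SatisfiesSeifertEq

theorem seifertDelta_nonneg {e₀ : ℤ} {p p' : ι → ℕ} (h : SatisfiesSeifertEq e₀ p p')
    (hp : ∀ i, 0 < p i) {n : ℕ} (hn : Fintype.card ι * ∏ i, p i ≤ n) :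
    0 ≤ seifertDelta e₀ p p' n := by
  have hP : (0 : ℚ) < ∏ i, (p i : ℚ) := prod_pos fun i _ => by exact_mod_cast hp i
  have hceil : ∑ i, (⌈(n * p' i : ℚ) / p i⌉ : ℚ)
      ≤ n * (-e₀ - 1 / ∏ i, (p i : ℚ)) + Fintype.card ι := by
    calc ∑ i, (⌈(n * p' i : ℚ) / p i⌉ : ℚ) ≤ ∑ i, ((n * p' i : ℚ) / p i + 1) :=
          sum_le_sum fun i _ => (Int.ceil_lt_add_one _).le
      _ = _ := by simp only [sum_add_distrib, mul_div_assoc, ← mul_sum, h.sum_div hp]; simp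
  have hn' : (Fintype.card ι : ℚ) ≤ n / ∏ i, (p i : ℚ) := by
    rw [le_div_iff₀ hP]; exact_mod_cast hn
  have : (0 : ℚ) ≤ seifertDelta e₀ p p' n := by
    rw [seifertDelta, abs_of_neg (h.lt_zero hp)]
    push_cast
    linarith [mul_one_div (n : ℚ) (∏ i, (p i : ℚ))]
  exact_mod_cast this

theorem hasFiniteSupport_min_zero_seifertDelta {e₀ : ℤ} {p p' : ι → ℕ}
    (h : SatisfiesSeifertEq e₀ p p') (hp : ∀ i, 0 < p i) :
    (fun n => min 0 (seifertDelta e₀ p p' n)).HasFiniteSupport := by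
  refine (Set.finite_Iio (Fintype.card ι * ∏ i, p i)).subset fun n hn => ?_
  by_contra hlt
  exact hn (min_eq_left (seifertDelta_nonneg h hp (not_lt.mp hlt)))

variable {l : ℕ} {p : Fin (l + 1) → ℕ} {e₀ E₀ : ℤ} {p' : Fin l → ℕ} {P' : Fin (l + 1) → ℕ}

theorem SatisfiesSeifertEq.dvd_last_mul_sub
    (h : SatisfiesSeifertEq e₀ (fun i => p i.castSucc) p') (H : SatisfiesSeifertEq E₀ p P')
    (j : Fin l) :
    (p j.castSucc : ℤ) ∣ p (Fin.last l) * P' j.castSucc - p' j := by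
  have hp' := h.dvd_prod_erase_mul_add_one j
  have hP' := H.dvd_prod_erase_mul_add_one j.castSucc
  rw [Fin.prod_erase_castSucc] at hP'
  set A := ∏ k ∈ univ.erase j, (p k.castSucc : ℤ)
  -- `A * p' j ≡ -1 [ZMOD p j]`, so `A` is a unit modulo `p j`.
  have hcop : IsCoprime (p j.castSucc : ℤ) A := by
    obtain ⟨c, hc⟩ := hp'
    exact ⟨c, -p' j, by linear_combination -hc⟩
  refine hcop.dvd_of_dvd_mul_left ?_
  convert dvd_sub hP' hp' using 1
  ring

theorem SatisfiesSeifertEq.sub_mul_last (h : SatisfiesSeifertEq e₀ (fun i => p i.castSucc) p')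
    (H : SatisfiesSeifertEq E₀ p P') (hp : ∀ i, 0 < p i) :
    (e₀ : ℚ) - E₀ * p (Fin.last l) = ∑ j : Fin l,
      (p (Fin.last l) * P' j.castSucc - p' j : ℚ) / p j.castSucc + P' (Fin.last l) := by
  have hp0 : ∀ i, (p i : ℚ) ≠ 0 := fun i => by exact_mod_cast (hp i).ne'
  have hprod : ∏ j : Fin l, (p j.castSucc : ℚ) ≠ 0 := prod_ne_zero_iff.mpr fun j _ => hp0 _
  have h₂ := H.sum_div hp
  rw [Fin.sum_univ_castSucc, Fin.prod_univ_castSucc, ← eq_sub_iff_add_eq] at h₂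
  simp only [sub_div, sum_sub_distrib, mul_div_assoc, ← mul_sum, h.sum_div fun i => hp _, h₂]
  field_simp [hp0 (Fin.last l)]
  ring

theorem seifertDelta_last_mul (h : SatisfiesSeifertEq e₀ (fun i => p i.castSucc) p')
    (H : SatisfiesSeifertEq E₀ p P') (hp : ∀ i, 0 < p i) (n : ℕ) :
    seifertDelta E₀ p P' (p (Fin.last l) * n) = seifertDelta e₀ (fun i => p i.castSucc) p' n := by
  have hsub := h.sub_mul_last H hp
  set q := p (Fin.last l)
  have hp0 : ∀ i, (p i : ℚ) ≠ 0 := fun i => by exact_mod_cast (hp i).ne'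
  have hq : (q : ℚ) ≠ 0 := hp0 _
  choose k hk using h.dvd_last_mul_sub H
  have hkQ : ∀ j : Fin l, (q * P' j.castSucc - p' j : ℚ) / p j.castSucc = k j := fun j => by
    rw [div_eq_iff (hp0 _)]; exact_mod_cast (hk j).trans (mul_comm _ _)
  have he : e₀ - E₀ * q = ∑ j, k j + P' (Fin.last l) := by
    simp only [hkQ] at hsub
    exact_mod_cast hsub
  have hceil : ∀ j : Fin l, ⌈((q * n : ℕ) * P' j.castSucc : ℚ) / p j.castSucc⌉
      = ⌈(n * p' j : ℚ) / p j.castSucc⌉ + n * k j := fun j => by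
    rw [show ((q * n : ℕ) * P' j.castSucc : ℚ) / p j.castSucc
        = (n * p' j : ℚ) / p j.castSucc + ((n * k j : ℤ) : ℚ) by
      rw [Int.cast_mul, Int.cast_natCast, ← hkQ j]; push_cast; ring, Int.ceil_add_intCast]
  have hlast : ⌈((q * n : ℕ) * P' (Fin.last l) : ℚ) / q⌉ = n * P' (Fin.last l) := by
    rw [show ((q * n : ℕ) * P' (Fin.last l) : ℚ) / q = ((n * P' (Fin.last l) : ℤ) : ℚ) by
      push_cast; field_simp, Int.ceil_intCast]
  simp only [seifertDelta]
  rw [Fin.sum_univ_castSucc, hlast, sum_congr rfl fun j _ => hceil j, sum_add_distrib, ← mul_sum,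
    abs_of_neg (H.lt_zero hp), abs_of_neg (h.lt_zero fun i => hp _)]
  push_cast
  linear_combination (n : ℤ) * he

end Seifert

theorem stmt_13_general (l : ℕ) (p : Fin (l + 1) → ℕ)
    (hp1 : ∀ i, 1 < p i)
    -- data for the truncated tuple (p₁, …, p_l)
    (e0 : ℤ) (p' : Fin l → ℕ)
    (heq : e0 * ∏ i : Fin l, (p i.castSucc : ℤ)
      + ∑ i : Fin l, (∏ j ∈ Finset.univ.erase i, (p j.castSucc : ℤ)) * (p' i : ℤ) = -1)
    (Δ : ℕ → ℤ)
    (hΔ : ∀ n : ℕ, Δ n = 1 + |e0| * n - ∑ i : Fin l, ⌈(n * p' i : ℚ) / p i.castSucc⌉)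
    -- data for the full tuple (p₁, …, p_l, p_{l+1})
    (E0 : ℤ) (P' : Fin (l + 1) → ℕ)
    (hEq : E0 * ∏ i, (p i : ℤ)
      + ∑ i, (∏ j ∈ Finset.univ.erase i, (p j : ℤ)) * (P' i : ℤ) = -1)
    (Δ' : ℕ → ℤ)
    (hΔ' : ∀ n : ℕ, Δ' n = 1 + |E0| * n - ∑ i, ⌈(n * P' i : ℚ) / p i⌉) :
    |∑ᶠ n : ℕ, min 0 (Δ n)| ≤ |∑ᶠ n : ℕ, min 0 (Δ' n)| := by
  have hp : ∀ i, 0 < p i := fun i => (hp1 i).pos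
  obtain rfl : Δ = seifertDelta e0 (fun i => p i.castSucc) p' := funext hΔ
  obtain rfl : Δ' = seifertDelta E0 p P' := funext hΔ'
  rw [abs_of_nonpos (finsum_nonpos fun _ => min_le_left _ _),
    abs_of_nonpos (finsum_nonpos fun _ => min_le_left _ _), neg_le_neg_iff]
  calc ∑ᶠ n, min 0 (seifertDelta E0 p P' n)
      ≤ ∑ᶠ n, min 0 (seifertDelta E0 p P' (p (Fin.last l) * n)) :=
        finsum_le_finsum_comp_of_nonpos (fun n => min_le_left _ _)
          (hasFiniteSupport_min_zero_seifertDelta hEq hp) (mul_right_injective₀ (hp _).ne')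
    _ = ∑ᶠ n, min 0 (seifertDelta e0 (fun i => p i.castSucc) p' n) := by
        simp only [seifertDelta_last_mul heq hEq hp]

/-- Monotonicity of `κ` under the addition of one more singular fiber:
`κ(p₁,…,p_l) ≤ κ(p₁,…,p_l,p_{l+1})`. -/
theorem stmt_13 (l : ℕ) (hl : 3 ≤ l) (p : Fin (l + 1) → ℕ)
    (hp1 : ∀ i, 1 < p i) (hmono : StrictMono p)
    (hcop : ∀ i j, i ≠ j → Nat.Coprime (p i) (p j))
    -- data for the truncated tuple (p₁, …, p_l)
    (e0 : ℤ) (p' : Fin l → ℕ) (hp' : ∀ i : Fin l, p' i ≤ p i.castSucc - 1)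
    (heq : e0 * ∏ i : Fin l, (p i.castSucc : ℤ)
      + ∑ i : Fin l, (∏ j ∈ Finset.univ.erase i, (p j.castSucc : ℤ)) * (p' i : ℤ) = -1)
    (Δ : ℕ → ℤ)
    (hΔ : ∀ n : ℕ, Δ n = 1 + |e0| * n - ∑ i : Fin l, ⌈(n * p' i : ℚ) / p i.castSucc⌉)
    -- data for the full tuple (p₁, …, p_l, p_{l+1})
    (E0 : ℤ) (P' : Fin (l + 1) → ℕ) (hP' : ∀ i, P' i ≤ p i - 1)
    (hEq : E0 * ∏ i, (p i : ℤ)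
      + ∑ i, (∏ j ∈ Finset.univ.erase i, (p j : ℤ)) * (P' i : ℤ) = -1)
    (Δ' : ℕ → ℤ)
    (hΔ' : ∀ n : ℕ, Δ' n = 1 + |E0| * n - ∑ i, ⌈(n * P' i : ℚ) / p i⌉) :
    |∑ᶠ n : ℕ, min 0 (Δ n)| ≤ |∑ᶠ n : ℕ, min 0 (Δ' n)| :=
  stmt_13_general l p hp1 e0 p' heq Δ hΔ E0 P' hEq Δ' hΔ'
end
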